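/- Let φ(x,y) = sin x · sin y and u₀(x,y) = sin²x + sin²y. Suppose u : ℝ² → ℝ is continuous on the closed square [0,π] × [0,π], twice continuously differentiable on the open square (0,π) × (0,π), satisfies −(1/2)·(∂²u/∂x² + ∂²u/∂y²) + (1/(2·φ))·((∂φ/∂x)·(∂u/∂x) + (∂φ/∂y)·(∂u/∂y)) = u on (0,π) × (0,π), vanishes on the boundary of [0,π] × [0,π], and is such that the quotient u/u₀ extends to a continuous function on [0,π] × [0,π] that vanishes on the boundary. Then u is identically zero on [0,π] × [0,π]. -/

import Mathlib

/-!
Where `sin x sin y ≠ 0`, the operator `L u = -(1/2) Δu + ⟨∇φ, ∇u⟩ / (2φ)` splits into the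
one-dimensional operators `g ↦ -(1/2) g'' + (cot t / 2) g'` acting on the two coordinate slices, so
`L G ≥ 0` at an interior local maximum of a `C²` function `G`. The function `u₀` solves `L u₀ = u₀`,
and `W = u₀ (u₀ - 3 sin x sin y)` is a strict subsolution: `L W < W`.

Let `v = u / u₀`, fix `ε > 0` and let `m` be the maximum of `v + ε (u₀ - 3 sin x sin y)` over the
closed square. At an interior maximum point, `G = u - m u₀ + ε W = u₀ (v + ε (u₀ - 3 sin x sin y) - m)`
would have a local maximum `0`, while `L G = G + ε (L W - W) < 0` there. So the maximum is attained
on the boundary, where `v = 0`, which gives `v ≤ 10 ε`. Hence `u ≤ 0`, and likewise `-u ≤ 0`.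
-/

open Real Set

/-- First coordinate partial derivative of a function on `ℝ²`. -/
noncomputable def pdX (f : ℝ × ℝ → ℝ) (p : ℝ × ℝ) : ℝ := deriv (fun t => f (t, p.2)) p.1

/-- Second coordinate partial derivative of a function on `ℝ²`. -/
noncomputable def pdY (f : ℝ × ℝ → ℝ) (p : ℝ × ℝ) : ℝ := deriv (fun t => f (p.1, t)) p.2

/-- Euclidean Laplacian on `ℝ²` via coordinate partial derivatives. -/
noncomputable def lap (f : ℝ × ℝ → ℝ) (p : ℝ × ℝ) : ℝ := pdX (pdX f) p + pdY (pdY f) p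

open Filter Topology Polynomial

lemma IsLocalMax.deriv_deriv_nonpos {f : ℝ → ℝ} {x : ℝ} (h : IsLocalMax f x)
    (hc : ContinuousAt f x) : deriv (deriv f) x ≤ 0 := by
  by_contra! hpos
  have hconst : f =ᶠ[𝓝 x] fun _ => f x :=
    ((isLocalMin_of_deriv_deriv_pos hpos h.deriv_eq_zero hc).and h).mono
      fun y hy => le_antisymm hy.2 hy.1
  have := hconst.deriv.deriv_eq
  simp only [deriv_const', deriv_const] at this
  linarith

noncomputable def sliceOp (g : ℝ → ℝ) (t : ℝ) : ℝ :=
  -(1 / 2) * deriv (deriv g) t + cos t / (2 * sin t) * deriv g t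

section SliceOp

variable {f g : ℝ → ℝ} {t : ℝ}

lemma sliceOp_add (hf : ContDiffAt ℝ 2 f t) (hg : ContDiffAt ℝ 2 g t) :
    sliceOp (fun s => f s + g s) t = sliceOp f t + sliceOp g t := by
  have hnear {h : ℝ → ℝ} (hh : ContDiffAt ℝ 2 h t) : ∀ᶠ s in 𝓝 t, DifferentiableAt ℝ h s :=
    (hh.eventually (by simp)).mono fun s hs => hs.differentiableAt two_ne_zero
  have hderiv {h : ℝ → ℝ} (hh : ContDiffAt ℝ 2 h t) : DifferentiableAt ℝ (deriv h) t :=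
    (hh.derivWithin (m := 1) (by norm_num)).differentiableAt one_ne_zero
  have hd : deriv (fun s => f s + g s) =ᶠ[𝓝 t] fun s => deriv f s + deriv g s :=
    ((hnear hf).and (hnear hg)).mono fun s hs => deriv_add hs.1 hs.2
  rw [sliceOp, sliceOp, sliceOp, hd.deriv_eq, deriv_fun_add (hderiv hf) (hderiv hg),
    hd.eq_of_nhds]
  ring

lemma sliceOp_const_mul (c : ℝ) : sliceOp (fun s => c * f s) t = c * sliceOp f t := by
  simp only [sliceOp, deriv_const_mul_field']
  ring

lemma sliceOp_neg : sliceOp (fun s => -f s) t = -sliceOp f t := by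
  simp only [sliceOp, deriv.fun_neg']
  ring

lemma IsLocalMax.sliceOp_nonneg (h : IsLocalMax f t) (hc : ContinuousAt f t) :
    0 ≤ sliceOp f t := by
  rw [sliceOp, h.deriv_eq_zero]
  linarith [h.deriv_deriv_nonpos hc]

lemma sliceOp_eval_sin (P : ℝ[X]) (ht : sin t ≠ 0) :
    sliceOp (fun s => P.eval (sin s)) t =
      -(1 / 2) * (1 - sin t ^ 2) * P.derivative.derivative.eval (sin t)
        + P.derivative.eval (sin t) / (2 * sin t) := by
  have h1 : deriv (fun s => P.eval (sin s)) = fun s => P.derivative.eval (sin s) * cos s :=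
    funext fun s => ((P.hasDerivAt (sin s)).comp s (hasDerivAt_sin s)).deriv
  have h2 : HasDerivAt (fun s => P.derivative.eval (sin s) * cos s)
      (P.derivative.derivative.eval (sin t) * cos t * cos t
        - P.derivative.eval (sin t) * sin t) t :=
    (((P.derivative.hasDerivAt (sin t)).comp t (hasDerivAt_sin t)).fun_mul
      (hasDerivAt_cos t)).congr_deriv (by simp only [Function.comp_apply]; ring)
  rw [sliceOp, h1, h2.deriv]
  field_simp
  linear_combination (P.derivative.eval (sin t) - sin t * P.derivative.derivative.eval (sin t))
    * cos_sq' t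

end SliceOp

noncomputable def orbitOp (f : ℝ × ℝ → ℝ) (p : ℝ × ℝ) : ℝ :=
  sliceOp (fun t => f (t, p.2)) p.1 + sliceOp (fun t => f (p.1, t)) p.2

section OrbitOp

variable {f g : ℝ × ℝ → ℝ} {p : ℝ × ℝ}

lemma ContDiffAt.fst_slice {n : WithTop ℕ∞} (hf : ContDiffAt ℝ n f p) :
    ContDiffAt ℝ n (fun t => f (t, p.2)) p.1 :=
  hf.comp p.1 (contDiffAt_id.prodMk contDiffAt_const)

lemma ContDiffAt.snd_slice {n : WithTop ℕ∞} (hf : ContDiffAt ℝ n f p) :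
    ContDiffAt ℝ n (fun t => f (p.1, t)) p.2 :=
  hf.comp p.2 (contDiffAt_const.prodMk contDiffAt_id)

lemma orbitOp_add (hf : ContDiffAt ℝ 2 f p) (hg : ContDiffAt ℝ 2 g p) :
    orbitOp (fun q => f q + g q) p = orbitOp f p + orbitOp g p := by
  simp only [orbitOp]
  rw [sliceOp_add hf.fst_slice hg.fst_slice, sliceOp_add hf.snd_slice hg.snd_slice]
  ring

lemma orbitOp_const_mul (c : ℝ) : orbitOp (fun q => c * f q) p = c * orbitOp f p := by
  simp only [orbitOp, sliceOp_const_mul]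
  ring

lemma orbitOp_neg : orbitOp (-f) p = -orbitOp f p := by
  simp only [orbitOp, Pi.neg_apply, sliceOp_neg]
  ring

lemma orbitOp_sub (hf : ContDiffAt ℝ 2 f p) (hg : ContDiffAt ℝ 2 g p) :
    orbitOp (fun q => f q - g q) p = orbitOp f p - orbitOp g p := by
  simp only [sub_eq_add_neg]
  exact (orbitOp_add hf hg.neg).trans (congrArg _ orbitOp_neg)

lemma IsLocalMax.orbitOp_nonneg (h : IsLocalMax f p) (hc : ContinuousAt f p) :
    0 ≤ orbitOp f p := by
  have h₁ : ContinuousAt (fun t : ℝ => (t, p.2)) p.1 := by fun_prop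
  have h₂ : ContinuousAt (fun t : ℝ => (p.1, t)) p.2 := by fun_prop
  exact add_nonneg ((h.comp_continuous h₁).sliceOp_nonneg (hc.comp h₁))
    ((h.comp_continuous h₂).sliceOp_nonneg (hc.comp h₂))

lemma orbitOp_of_swap (hf : ∀ a b, f (a, b) = f (b, a)) :
    orbitOp f p = sliceOp (fun t => f (t, p.2)) p.1 + sliceOp (fun t => f (t, p.1)) p.2 := by
  simp only [orbitOp, hf p.1]

end OrbitOp

lemma orbitOp_eq_of_sin_ne_zero (u : ℝ × ℝ → ℝ) {p : ℝ × ℝ} (h₁ : sin p.1 ≠ 0)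
    (h₂ : sin p.2 ≠ 0) :
    -(1 / 2) * lap u p + (1 / (2 * (sin p.1 * sin p.2))) *
        (pdX (fun q => sin q.1 * sin q.2) p * pdX u p
          + pdY (fun q => sin q.1 * sin q.2) p * pdY u p)
      = orbitOp u p := by
  have hX : pdX (fun q => sin q.1 * sin q.2) p = cos p.1 * sin p.2 :=
    ((hasDerivAt_sin p.1).mul_const (sin p.2)).deriv
  have hY : pdY (fun q => sin q.1 * sin q.2) p = sin p.1 * cos p.2 :=
    ((hasDerivAt_sin p.2).const_mul (sin p.1)).deriv
  rw [hX, hY]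
  simp only [orbitOp, sliceOp, lap, pdX, pdY]
  field_simp
  ring

abbrev openSquare : Set (ℝ × ℝ) := Ioo 0 π ×ˢ Ioo 0 π

abbrev closedSquare : Set (ℝ × ℝ) := Icc 0 π ×ˢ Icc 0 π

lemma frontier_closedSquare : frontier closedSquare = closedSquare \ openSquare := by
  rw [(isClosed_Icc.prod isClosed_Icc).frontier_eq, interior_prod_eq, interior_Icc]

lemma sin_pos_of_mem_openSquare {p : ℝ × ℝ} (hp : p ∈ openSquare) :
    0 < sin p.1 ∧ 0 < sin p.2 :=
  ⟨sin_pos_of_pos_of_lt_pi hp.1.1 hp.1.2, sin_pos_of_pos_of_lt_pi hp.2.1 hp.2.2⟩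

noncomputable def u₀ (p : ℝ × ℝ) : ℝ := sin p.1 ^ 2 + sin p.2 ^ 2

noncomputable def corrector (p : ℝ × ℝ) : ℝ := u₀ p - 3 * (sin p.1 * sin p.2)

noncomputable def barrier (p : ℝ × ℝ) : ℝ := u₀ p * corrector p

lemma u₀_pos {p : ℝ × ℝ} (hp : p ∈ openSquare) : 0 < u₀ p := by
  have := (sin_pos_of_mem_openSquare hp).1
  unfold u₀
  positivity

lemma abs_corrector_le (p : ℝ × ℝ) : |corrector p| ≤ 5 := by
  have h₀ : 0 ≤ u₀ p := by unfold u₀; positivity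
  have h₂ : u₀ p ≤ 2 := by unfold u₀; linarith [sin_sq_le_one p.1, sin_sq_le_one p.2]
  have hφ : |sin p.1 * sin p.2| ≤ 1 := by
    rw [abs_mul]
    exact mul_le_one₀ (abs_sin_le_one _) (abs_nonneg _) (abs_sin_le_one _)
  rw [abs_le] at hφ ⊢
  unfold corrector
  constructor <;> linarith [hφ.1, hφ.2]

lemma sliceOp_u₀ (y : ℝ) {t : ℝ} (ht : sin t ≠ 0) :
    sliceOp (fun s => u₀ (s, y)) t = sin t ^ 2 := by
  have hP : (fun s => u₀ (s, y)) = fun s => (X ^ 2 + C (sin y ^ 2)).eval (sin s) := by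
    simp [u₀]
  rw [hP, sliceOp_eval_sin _ ht]
  simp only [one_div, neg_mul, derivative_X_pow_succ, Nat.cast_one, map_add, map_one,
    pow_one, derivative_C, add_zero, derivative_mul, derivative_one, zero_mul, derivative_X, mul_one,
    zero_add, eval_add, eval_one, eval_mul, eval_X]
  field_simp
  ring

lemma orbitOp_u₀ {p : ℝ × ℝ} (hp : p ∈ openSquare) : orbitOp u₀ p = u₀ p := by
  have hs := sin_pos_of_mem_openSquare hp
  rw [orbitOp_of_swap (fun a b => add_comm _ _), sliceOp_u₀ _ hs.1.ne', sliceOp_u₀ _ hs.2.ne', u₀]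

lemma sliceOp_barrier (y : ℝ) {t : ℝ} (ht : sin t ≠ 0) :
    sliceOp (fun s => barrier (s, y)) t =
      -(1 / 2) * (1 - sin t ^ 2) * (12 * sin t ^ 2 + 4 * sin y ^ 2 - 18 * sin y * sin t)
        + (4 * sin t ^ 3 + 4 * sin y ^ 2 * sin t - 9 * sin y * sin t ^ 2 - 3 * sin y ^ 3)
          / (2 * sin t) := by
  have hP : (fun s => barrier (s, y)) = fun s =>
      ((X ^ 2 + C (sin y ^ 2)) * (X ^ 2 + C (sin y ^ 2) - 3 * (C (sin y) * X))).eval (sin s) := by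
    funext s
    simp only [barrier, corrector, u₀, eval_mul, eval_add, eval_sub, eval_pow, eval_X, eval_C,
      eval_ofNat]
    ring
  rw [hP, sliceOp_eval_sin _ ht]
  simp only [one_div, neg_mul, derivative_mul, derivative_X_pow_succ, Nat.cast_one,
    map_add, map_one, pow_one, derivative_C, add_zero, derivative_sub, derivative_ofNat, zero_mul,
    derivative_X, mul_one, zero_add, derivative_one, mul_zero, sub_zero, eval_add, eval_mul, eval_one,
    eval_sub, eval_pow, eval_X, eval_C, eval_ofNat]
  ring

-- `2ab (L W - W)` at a point with `sin x = a`, `sin y = b`, written in `q = ab` and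
-- `d = (a - b)²`; for `a, b ∈ (0, 1]` one has `d ≤ (1 - q)²`.
lemma barrier_defect_neg {q d : ℝ} (hq : 0 < q) (hq1 : q ≤ 1) (hd : 0 ≤ d)
    (hdq : d ≤ (1 - q) ^ 2) :
    (10 * q - 3) * d ^ 2 + 4 * q * (7 * q - 5) * d - 4 * q ^ 2 < 0 := by
  nlinarith [mul_nonneg hd (sub_nonneg.2 hdq), mul_nonneg hq.le (sub_nonneg.2 hq1), mul_pos hq hq]

lemma orbitOp_barrier_lt {p : ℝ × ℝ} (hp : p ∈ openSquare) : orbitOp barrier p < barrier p := by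
  obtain ⟨ha, hb⟩ := sin_pos_of_mem_openSquare hp
  have hswap : ∀ a b, barrier (a, b) = barrier (b, a) := fun a b => by
    simp only [barrier, corrector, u₀]; ring
  rw [orbitOp_of_swap hswap, sliceOp_barrier _ ha.ne', sliceOp_barrier _ hb.ne']
  simp only [barrier, corrector, u₀]
  set a := sin p.1
  set b := sin p.2
  have hgap : (a - b) ^ 2 ≤ (1 - a * b) ^ 2 := by
    nlinarith [mul_nonneg (sub_nonneg.2 (sin_sq_le_one p.1)) (sub_nonneg.2 (sin_sq_le_one p.2))]
  have hab1 : a * b ≤ 1 := by nlinarith [sin_le_one p.1, sin_le_one p.2]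
  have key := barrier_defect_neg (mul_pos ha hb) hab1 (sq_nonneg (a - b)) hgap
  rw [← sub_neg]
  calc _ = ((10 * (a * b) - 3) * ((a - b) ^ 2) ^ 2 + 4 * (a * b) * (7 * (a * b) - 5) * (a - b) ^ 2
          - 4 * (a * b) ^ 2) / (2 * a * b) := by
        field_simp
        ring
    _ < 0 := div_neg_of_neg_of_pos key (by positivity)

lemma not_isMaxOn_of_orbitOp_eq_self {u v : ℝ × ℝ → ℝ} (hreg : ContDiffOn ℝ 2 u openSquare)
    (hL : ∀ p ∈ openSquare, orbitOp u p = u p) (hv : ∀ p ∈ openSquare, u p = u₀ p * v p)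
    {ε : ℝ} (hε : 0 < ε) {p₀ : ℝ × ℝ} (hp₀ : p₀ ∈ openSquare) :
    ¬ IsMaxOn (fun p => v p + ε * corrector p) openSquare p₀ := by
  intro hmax
  set m := v p₀ + ε * corrector p₀
  set G := fun q => u q - m * u₀ q + ε * barrier q
  have hG : ∀ q ∈ openSquare, G q = u₀ q * (v q + ε * corrector q - m) := fun q hq => by
    simp only [G, barrier, hv q hq]
    ring
  have hGmax : IsLocalMax G p₀ := by
    filter_upwards [(isOpen_Ioo.prod isOpen_Ioo).mem_nhds hp₀] with q hq
    rw [hG q hq, hG p₀ hp₀, sub_self, mul_zero]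
    exact mul_nonpos_of_nonneg_of_nonpos (u₀_pos hq).le (sub_nonpos.2 (hmax hq))
  have hu : ContDiffAt ℝ 2 u p₀ := hreg.contDiffAt ((isOpen_Ioo.prod isOpen_Ioo).mem_nhds hp₀)
  have hmu₀ : ContDiffAt ℝ 2 (fun q => m * u₀ q) p₀ := by unfold u₀; fun_prop
  have hεb : ContDiffAt ℝ 2 (fun q => ε * barrier q) p₀ := by
    unfold barrier corrector u₀; fun_prop
  have hLG : orbitOp G p₀ = u p₀ - m * u₀ p₀ + ε * orbitOp barrier p₀ := by
    rw [orbitOp_add (hu.sub hmu₀) hεb, orbitOp_sub hu hmu₀, orbitOp_const_mul,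
      orbitOp_const_mul, hL p₀ hp₀, orbitOp_u₀ hp₀]
  have hG₀ : u p₀ - m * u₀ p₀ + ε * barrier p₀ = 0 := by
    simpa [G, m] using hG p₀ hp₀
  have hnonneg := hGmax.orbitOp_nonneg ((hu.sub hmu₀).add hεb).continuousAt
  linarith [mul_lt_mul_of_pos_left (orbitOp_barrier_lt hp₀) hε]

lemma nonpos_of_orbitOp_eq_self {u v : ℝ × ℝ → ℝ} (hreg : ContDiffOn ℝ 2 u openSquare)
    (hL : ∀ p ∈ openSquare, orbitOp u p = u p) (hv : ∀ p ∈ openSquare, u p = u₀ p * v p)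
    (hvc : ContinuousOn v closedSquare) (hv₀ : ∀ p ∈ frontier closedSquare, v p = 0) :
    ∀ q ∈ openSquare, u q ≤ 0 := by
  have hsub : openSquare ⊆ closedSquare := prod_mono Ioo_subset_Icc_self Ioo_subset_Icc_self
  intro q hq
  suffices hvq : v q ≤ 0 by
    rw [hv q hq]
    exact mul_nonpos_of_nonneg_of_nonpos (u₀_pos hq).le hvq
  refine le_of_forall_pos_le_add fun δ hδ => ?_
  have hε : 0 < δ / 10 := by positivity
  have hcont : ContinuousOn (fun p => v p + δ / 10 * corrector p) closedSquare :=
    hvc.add (Continuous.continuousOn (by unfold corrector u₀; fun_prop))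
  obtain ⟨p₀, hp₀, hmax⟩ := (isCompact_Icc.prod isCompact_Icc).exists_isMaxOn
    ⟨(0, 0), ⟨le_rfl, pi_pos.le⟩, ⟨le_rfl, pi_pos.le⟩⟩ hcont
  have hp₀S : p₀ ∉ openSquare := fun h =>
    not_isMaxOn_of_orbitOp_eq_self hreg hL hv hε h (hmax.on_subset hsub)
  have hvp₀ : v p₀ = 0 := hv₀ p₀ (frontier_closedSquare ▸ ⟨hp₀, hp₀S⟩)
  have hq_le : v q + δ / 10 * corrector q ≤ v p₀ + δ / 10 * corrector p₀ := hmax (hsub hq)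
  have hgap : corrector p₀ - corrector q ≤ 10 := by
    linarith [abs_le.1 (abs_corrector_le p₀), abs_le.1 (abs_corrector_le q)]
  linarith [mul_le_mul_of_nonneg_left hgap hε.le]

theorem stmt11_general (u : ℝ × ℝ → ℝ)
    (hreg : ContDiffOn ℝ 2 u (Ioo (0:ℝ) π ×ˢ Ioo (0:ℝ) π))
    (heq : ∀ p ∈ Ioo (0:ℝ) π ×ˢ Ioo (0:ℝ) π,
      -(1 / 2) * lap u p
        + (1 / (2 * (Real.sin p.1 * Real.sin p.2))) *
          (pdX (fun q => Real.sin q.1 * Real.sin q.2) p * pdX u p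
            + pdY (fun q => Real.sin q.1 * Real.sin q.2) p * pdY u p)
      = u p)
    (hbdry : ∀ p ∈ frontier (Icc (0:ℝ) π ×ˢ Icc (0:ℝ) π), u p = 0)
    (hquot : ∃ v : ℝ × ℝ → ℝ,
      ContinuousOn v (Icc (0:ℝ) π ×ˢ Icc (0:ℝ) π) ∧
      (∀ p ∈ Ioo (0:ℝ) π ×ˢ Ioo (0:ℝ) π,
        v p = u p / (Real.sin p.1 ^ 2 + Real.sin p.2 ^ 2)) ∧
      (∀ p ∈ frontier (Icc (0:ℝ) π ×ˢ Icc (0:ℝ) π), v p = 0)) :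
    ∀ p ∈ Icc (0:ℝ) π ×ˢ Icc (0:ℝ) π, u p = 0 := by
  obtain ⟨v, hvc, hv, hv₀⟩ := hquot
  have hu : ∀ p ∈ openSquare, u p = u₀ p * v p := fun p hp => by
    rw [hv p hp]
    exact (mul_div_cancel₀ _ (u₀_pos hp).ne').symm
  have hL : ∀ p ∈ openSquare, orbitOp u p = u p := fun p hp => by
    have hs := sin_pos_of_mem_openSquare hp
    rw [← orbitOp_eq_of_sin_ne_zero u hs.1.ne' hs.2.ne', heq p hp]
  intro p hp
  by_cases hpS : p ∈ openSquare
  · refine le_antisymm (nonpos_of_orbitOp_eq_self hreg hL hu hvc hv₀ p hpS) (neg_nonpos.1 ?_)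
    exact nonpos_of_orbitOp_eq_self (u := -u) (v := -v) hreg.neg
      (fun q hq => by rw [orbitOp_neg, hL q hq, Pi.neg_apply])
      (fun q hq => by rw [Pi.neg_apply, Pi.neg_apply, hu q hq, mul_neg]) hvc.neg
      (fun q hq => by rw [Pi.neg_apply, hv₀ q hq, neg_zero]) p hpS
  · exact hbdry p (frontier_closedSquare ▸ ⟨hp, hpS⟩)

/-- Uniqueness for the linear elliptic equation satisfied by the orbit-metric entries
on the flat square: with `φ(x,y) = sin x sin y` and `u₀(x,y) = sin²x + sin²y`, any
solution `u` of `−(1/2)Δu + (1/(2φ))⟨∇φ, ∇u⟩ = u` on the open square, vanishing on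
the boundary and with `u/u₀` extending continuously by `0` to the boundary, vanishes
identically on the closed square. -/
theorem stmt11 (u : ℝ × ℝ → ℝ)
    (hcont : ContinuousOn u (Icc (0:ℝ) π ×ˢ Icc (0:ℝ) π))
    (hreg : ContDiffOn ℝ 2 u (Ioo (0:ℝ) π ×ˢ Ioo (0:ℝ) π))
    (heq : ∀ p ∈ Ioo (0:ℝ) π ×ˢ Ioo (0:ℝ) π,
      -(1 / 2) * lap u p
        + (1 / (2 * (Real.sin p.1 * Real.sin p.2))) *
          (pdX (fun q => Real.sin q.1 * Real.sin q.2) p * pdX u p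
            + pdY (fun q => Real.sin q.1 * Real.sin q.2) p * pdY u p)
      = u p)
    (hbdry : ∀ p ∈ frontier (Icc (0:ℝ) π ×ˢ Icc (0:ℝ) π), u p = 0)
    (hquot : ∃ v : ℝ × ℝ → ℝ,
      ContinuousOn v (Icc (0:ℝ) π ×ˢ Icc (0:ℝ) π) ∧
      (∀ p ∈ Ioo (0:ℝ) π ×ˢ Ioo (0:ℝ) π,
        v p = u p / (Real.sin p.1 ^ 2 + Real.sin p.2 ^ 2)) ∧
      (∀ p ∈ frontier (Icc (0:ℝ) π ×ˢ Icc (0:ℝ) π), v p = 0)) :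
    ∀ p ∈ Icc (0:ℝ) π ×ˢ Icc (0:ℝ) π, u p = 0 :=
  stmt11_general u hreg heq hbdry hquot
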